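/- Let ⟨Z_n,{a,b}⟩ be a standardized DFA and define inductively H₀ = {0} and, for k ≥ 1, D_k = {p | p ∈ dupl(w) for some word w with 0 ∈ excl(w) ⊆ H_{k−1} and |excl(w)| ≤ k} and H_k = ⟨D_k⟩. If H_ℓ = Z_n for some ℓ, then the DFA is completely reachable. -/
import Mathlib

/-- Action of a letter: `true` is `b : q ↦ q+1`, `false` is `a`. -/
def act {n : ℕ} (a : ZMod n → ZMod n) (q : ZMod n) (c : Bool) : ZMod n :=
  if c then q + 1 else a q

/-- Action of a word on a state. -/
def wact {n : ℕ} (a : ZMod n → ZMod n) (w : List Bool) (q : ZMod n) : ZMod n :=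
  w.foldl (act a) q

/-- Excluded set of a word. -/
def excl {n : ℕ} (a : ZMod n → ZMod n) (w : List Bool) : Set (ZMod n) :=
  {q | ∀ p, wact a w p ≠ q}

/-- Duplicate set of a word. -/
def dupl {n : ℕ} (a : ZMod n → ZMod n) (w : List Bool) : Set (ZMod n) :=
  {p | ∃ q₁ q₂, q₁ ≠ q₂ ∧ wact a w q₁ = p ∧ wact a w q₂ = p}

/-- Complete reachability for a standardized binary DFA on `ZMod n`. -/
def CompletelyReachable {n : ℕ} (a : ZMod n → ZMod n) : Prop :=
  ∀ S : Set (ZMod n), S.Nonempty → ∃ w : List Bool, Set.range (wact a w) = S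

/-- Standardized DFA: `a` has defect 1 with excluded state `0`, and `0·a = dupl(a)`,
i.e. `a 0` has a second preimage `r ≠ 0`. -/
def Standardized {n : ℕ} (a : ZMod n → ZMod n) : Prop :=
  Set.range a = {(0 : ZMod n)}ᶜ ∧ ∃ r : ZMod n, r ≠ 0 ∧ a r = a 0

/-- Edge of the Rystsov graph: for some word of defect 1, `q` is the excluded state
and `p` the duplicate state. -/
def RysEdge {n : ℕ} (a : ZMod n → ZMod n) (q p : ZMod n) : Prop :=
  ∃ w : List Bool, excl a w = {q} ∧ dupl a w = {p}

/-- The difference set `D₁`. -/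
def D1 {n : ℕ} (a : ZMod n → ZMod n) : Set (ZMod n) :=
  {p | RysEdge a 0 p}

/-- The set `D_k` built from a subgroup `H = H_{k-1}`. -/
def Dnext {n : ℕ} (a : ZMod n → ZMod n) (H : AddSubgroup (ZMod n)) (k : ℕ) : Set (ZMod n) :=
  {p | ∃ w : List Bool, p ∈ dupl a w ∧ (0 : ZMod n) ∈ excl a w ∧
    excl a w ⊆ (H : Set (ZMod n)) ∧ (excl a w).ncard ≤ k}

/-- The subgroup sequence `H_k`. -/
def Hk {n : ℕ} (a : ZMod n → ZMod n) : ℕ → AddSubgroup (ZMod n)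
  | 0 => ⊥
  | k + 1 => AddSubgroup.closure (Dnext a (Hk a k) (k + 1))

section Aux

variable {n : ℕ}

lemma wact_append (a : ZMod n → ZMod n) (u v : List Bool) (q : ZMod n) :
    wact a (u ++ v) q = wact a v (wact a u q) :=
  List.foldl_append ..

lemma wact_replicate_true (a : ZMod n → ZMod n) (t : ℕ) (q : ZMod n) :
    wact a (List.replicate t true) q = q + t := by
  induction t generalizing q with
  | zero => simp [wact]
  | succ t ih =>
    rw [List.replicate_succ]
    have h1 : wact a (true :: List.replicate t true) q
        = wact a (List.replicate t true) (q + 1) := rfl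
    rw [h1, ih]
    push_cast
    ring

lemma mem_of_add_mem [NeZero n] {X : Set (ZMod n)} {d x : ZMod n}
    (h : ∀ y ∈ X, y + d ∈ X) (hx : x + d ∈ X) : x ∈ X := by
  have himg : (fun y => y + d) '' X = X := by
    apply Set.eq_of_subset_of_ncard_le
    · rintro _ ⟨y, hy, rfl⟩; exact h y hy
    · rw [Set.ncard_image_of_injective _ (add_left_injective d)]
    · exact X.toFinite
  rw [← himg] at hx
  obtain ⟨y, hy, hyx⟩ := hx
  have : y = x := add_right_cancel hyx
  rwa [← this]

lemma closed_under_closure [NeZero n] {D X : Set (ZMod n)}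
    (h : ∀ x ∈ X, ∀ d ∈ D, x + d ∈ X) {g : ZMod n}
    (hg : g ∈ AddSubgroup.closure D) {x : ZMod n} (hx : x ∈ X) : x + g ∈ X := by
  let K : AddSubgroup (ZMod n) :=
  { carrier := {g | ∀ y, y ∈ X ↔ y + g ∈ X}
    zero_mem' := fun y => by simp
    add_mem' := fun {g₁ g₂} hg₁ hg₂ y => by rw [hg₁ y, hg₂ (y + g₁), add_assoc]
    neg_mem' := fun {g₁} hg₁ y => by
      constructor
      · intro hy
        exact (hg₁ (y + -g₁)).2 (by simpa using hy)
      · intro hy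
        have := (hg₁ (y + -g₁)).1 hy
        simpa using this }
  have hDK : D ⊆ (K : Set (ZMod n)) := by
    intro d hd y
    constructor
    · intro hy; exact h y hy d hd
    · intro hy; exact mem_of_add_mem (fun z hz => h z hz d hd) hy
  exact ((AddSubgroup.closure_le K).2 hDK hg x).1 hx

lemma exists_good_word [NeZero n] (a : ZMod n → ZMod n) (ℓ : ℕ) (hℓ : Hk a ℓ = ⊤)
    {S : Set (ZMod n)} (hS : S.Nonempty) (hSu : S ≠ Set.univ) :
    ∃ w : List Bool, excl a w ∩ S = ∅ ∧ (dupl a w ∩ S).Nonempty := by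
  by_contra hcon
  push_neg at hcon
  have hcon' : ∀ w : List Bool, excl a w ∩ S = ∅ → dupl a w ∩ S = ∅ := hcon
  set X := Sᶜ with hXdef
  have hX : X.Nonempty := Set.nonempty_compl.2 hSu
  -- step: closure under Hk k implies closure under Hk (k+1)
  have step : ∀ k : ℕ, (∀ x ∈ X, ∀ g ∈ Hk a k, x + g ∈ X) →
      (∀ x ∈ X, ∀ g ∈ Hk a (k + 1), x + g ∈ X) := by
    intro k hk x hx g hg
    refine closed_under_closure ?_ hg hx
    rintro y hy d ⟨w, hd, -, hsub, -⟩
    -- shift the word by y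
    set w' := w ++ List.replicate (y.val) true with hw'
    have hws : ∀ p, wact a w' p = wact a w p + y := by
      intro p
      rw [hw', wact_append, wact_replicate_true, ZMod.natCast_zmod_val]
    have hexcl : excl a w' ∩ S = ∅ := by
      ext q
      simp only [Set.mem_inter_iff, Set.mem_empty_iff_false, iff_false, not_and]
      intro hq hqS
      have hqe : q - y ∈ excl a w := by
        intro p hp
        exact hq p (by rw [hws p, hp]; ring)
      have : q - y ∈ Hk a k := hsub hqe
      have : y + (q - y) ∈ X := hk y hy _ this
      simp only [add_sub_cancel] at this
      exact this hqS
    have hdup := hcon' w' hexcl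
    have hdY : d + y ∈ dupl a w' := by
      obtain ⟨q₁, q₂, hne, h1, h2⟩ := hd
      exact ⟨q₁, q₂, hne, by rw [hws, h1], by rw [hws, h2]⟩
    have : d + y ∉ S := by
      intro hmem
      have : d + y ∈ dupl a w' ∩ S := ⟨hdY, hmem⟩
      rw [hdup] at this
      exact this
    have : d + y ∈ X := this
    rwa [add_comm y d]
  have base : ∀ x ∈ X, ∀ g ∈ Hk a 0, x + g ∈ X := by
    intro x hx g hg
    have : g = 0 := by simpa [Hk] using hg
    simpa [this] using hx
  have hall : ∀ j : ℕ, ∀ x ∈ X, ∀ g ∈ Hk a j, x + g ∈ X := by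
    intro j
    induction j with
    | zero => exact base
    | succ k ih => exact step k ih
  obtain ⟨x, hx⟩ := hX
  obtain ⟨s, hs⟩ := hS
  have := hall ℓ x hx (s - x) (by rw [hℓ]; trivial)
  simp only [add_sub_cancel] at this
  exact this hs

lemma reach_aux [NeZero n] (a : ZMod n → ZMod n) (ℓ : ℕ) (hℓ : Hk a ℓ = ⊤) :
    ∀ m : ℕ, ∀ S : Set (ZMod n), S.Nonempty → n - S.ncard ≤ m →
      ∃ w : List Bool, Set.range (wact a w) = S := by
  have huniv : ∀ S : Set (ZMod n), S = Set.univ → ∃ w : List Bool,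
      Set.range (wact a w) = S := by
    rintro S rfl
    exact ⟨[], Set.range_eq_univ.2 fun q => ⟨q, rfl⟩⟩
  intro m
  induction m with
  | zero =>
    intro S hS hcard
    apply huniv
    apply Set.eq_of_subset_of_ncard_le (Set.subset_univ S) _ Set.finite_univ
    rw [Set.ncard_univ, Nat.card_zmod]
    omega
  | succ m ih =>
    intro S hS hcard
    by_cases hu : S = Set.univ
    · exact huniv S hu
    · obtain ⟨w, hwe, hwd⟩ := exists_good_word a ℓ hℓ hS hu
      set T := wact a w ⁻¹' S with hT
      have hTS : wact a w '' T = S := by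
        apply Set.Subset.antisymm
        · rintro _ ⟨p, hp, rfl⟩; exact hp
        · intro s hs
          have hne : ¬ (∀ p, wact a w p ≠ s) := by
            intro h
            have : s ∈ excl a w ∩ S := ⟨h, hs⟩
            rw [hwe] at this
            exact this
          push_neg at hne
          obtain ⟨p, hp⟩ := hne
          exact ⟨p, by simp [hT, Set.mem_preimage, hp, hs], hp⟩
      have hTne : T.Nonempty := by
        obtain ⟨s, hs⟩ := hS
        have : s ∈ wact a w '' T := hTS ▸ hs
        obtain ⟨p, hp, -⟩ := this
        exact ⟨p, hp⟩
      have hlt : S.ncard < T.ncard := by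
        have hle : S.ncard ≤ T.ncard := by
          rw [← hTS]; exact Set.ncard_image_le T.toFinite
        rcases lt_or_eq_of_le hle with h | h
        · exact h
        · exfalso
          have hinj : Set.InjOn (wact a w) T := by
            apply Set.injOn_of_ncard_image_eq _ T.toFinite
            rw [hTS, h]
          obtain ⟨p, ⟨q₁, q₂, hne, h1, h2⟩, hpS⟩ := hwd
          have hq₁ : q₁ ∈ T := by simp [hT, Set.mem_preimage, h1, hpS]
          have hq₂ : q₂ ∈ T := by simp [hT, Set.mem_preimage, h2, hpS]
          exact hne (hinj hq₁ hq₂ (h1.trans h2.symm))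
      obtain ⟨u, hu'⟩ := ih T hTne (by omega)
      refine ⟨u ++ w, ?_⟩
      have hcomp : wact a (u ++ w) = wact a w ∘ wact a u :=
        funext fun q => wact_append a u w q
      rw [hcomp, Set.range_comp, hu', hTS]

end Aux

theorem completely_reachable_of_Hk_top {n : ℕ} (hn : 2 ≤ n) (a : ZMod n → ZMod n)
    (hstd : Standardized a) (ℓ : ℕ) (hℓ : Hk a ℓ = ⊤) :
    CompletelyReachable a := by
  haveI : NeZero n := ⟨by omega⟩
  intro S hS
  exact reach_aux a ℓ hℓ (n - S.ncard) S hS le_rfl
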